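/- Let A be a commutative multiplicative hyperring with identity and let Q be a radical 𝒞-hyperideal of A (i.e. rad(Q) = Q), and let u,v ∈ ℕ with u > v. Then Q is a (u,v)-absorbing hyperideal of A if and only if Q is a v-absorbing hyperideal of A. -/

import Mathlib

/-- A commutative multiplicative hyperring with identity: `(A,+)` is a commutative group,
`∘ = hmul` is a commutative associative hyperoperation with nonempty values, satisfying
`x∘(y+z) ⊆ x∘y + x∘z`, `x∘(−y) = (−x)∘y = −(x∘y)`, and `a ∈ a∘1` for all `a`. -/
class CommHyperring (A : Type*) [AddCommGroup A] [One A] where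
  hmul : A → A → Set A
  hmul_nonempty : ∀ x y : A, (hmul x y).Nonempty
  hmul_comm : ∀ x y : A, hmul x y = hmul y x
  hmul_assoc : ∀ x y z : A, (⋃ a ∈ hmul y z, hmul x a) = ⋃ b ∈ hmul x y, hmul b z
  hmul_add : ∀ x y z : A, hmul x (y + z) ⊆ Set.image2 (· + ·) (hmul x y) (hmul x z)
  hmul_neg : ∀ x y : A, hmul x (-y) = Neg.neg '' hmul x y
  neg_hmul : ∀ x y : A, hmul (-x) y = Neg.neg '' hmul x y
  one_mem : ∀ a : A, a ∈ hmul a 1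

open CommHyperring

variable {A : Type*} [AddCommGroup A] [One A] [CommHyperring A]

/-- The hyperoperation extended to subsets: `X∘Y = ⋃_{x∈X, y∈Y} x∘y`. -/
def sMul (X Y : Set A) : Set A := ⋃ x ∈ X, ⋃ y ∈ Y, hmul x y

/-- The product `x₁∘⋯∘xₙ` of the members of a list. -/
def hProd : List A → Set A
  | [] => {1}
  | [a] => {a}
  | a :: l => ⋃ c ∈ hProd l, hmul a c

/-- `xⁿ = x∘⋯∘x` (`n` factors). -/
def hPow (a : A) (n : ℕ) : Set A := hProd (List.replicate n a)

/-- `a` is a unit if `1 ∈ a∘b` for some `b`. -/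
def IsUnitH (a : A) : Prop := ∃ b : A, (1 : A) ∈ hmul a b

/-- A hyperideal of `A`. -/
def IsHyperideal (B : Set A) : Prop :=
  B.Nonempty ∧ (∀ x ∈ B, ∀ y ∈ B, x - y ∈ B) ∧ ∀ r : A, ∀ x ∈ B, hmul r x ⊆ B

def IsProperHyperideal (B : Set A) : Prop := IsHyperideal B ∧ B ≠ Set.univ

/-- A prime hyperideal. -/
def IsPrimeHyperideal (B : Set A) : Prop :=
  IsProperHyperideal B ∧ ∀ x y : A, hmul x y ⊆ B → x ∈ B ∨ y ∈ B

/-- The prime radical: the intersection of all prime hyperideals containing `B`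
(`= A` if there are none). -/
def radH (B : Set A) : Set A := ⋂₀ {P : Set A | IsPrimeHyperideal P ∧ B ⊆ P}

/-- A `𝒞`-hyperideal: meets a finite product `⇒` contains it. -/
def IsCHyperideal (B : Set A) : Prop :=
  IsHyperideal B ∧ ∀ l : List A, l ≠ [] → (hProd l ∩ B).Nonempty → hProd l ⊆ B

def setAdd (X Y : Set A) : Set A := Set.image2 (· + ·) X Y

/-- The sum `C₁ + ⋯ + Cₙ` of the finite products coded by a list of lists. -/
def sumProds (L : List (List A)) : Set A := L.foldr (fun l S => setAdd (hProd l) S) {0}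

/-- A strong `𝒞`-hyperideal: meets a finite sum of finite products `⇒` contains it. -/
def IsStrongCHyperideal (B : Set A) : Prop :=
  IsHyperideal B ∧ ∀ L : List (List A), L ≠ [] → (∀ l ∈ L, l ≠ []) →
    (sumProds L ∩ B).Nonempty → sumProds L ⊆ B

/-- A `v`-absorbing hyperideal. -/
def IsNAbsorbing (Q : Set A) (v : ℕ) : Prop :=
  IsProperHyperideal Q ∧ ∀ l : List A, l.length = v + 1 → hProd l ⊆ Q →
    ∃ l', l'.Sublist l ∧ l'.length = v ∧ hProd l' ⊆ Q

/-- A `(u,v)`-absorbing hyperideal. -/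
def IsUVAbsorbing (Q : Set A) (u v : ℕ) : Prop :=
  IsProperHyperideal Q ∧ ∀ l : List A, l.length = u → (∀ x ∈ l, ¬IsUnitH x) → hProd l ⊆ Q →
    ∃ l', l'.Sublist l ∧ l'.length = v ∧ hProd l' ⊆ Q

/-- An `AB`-`(u,v)`-absorbing hyperideal. -/
def IsABUVAbsorbing (Q : Set A) (u v : ℕ) : Prop :=
  IsProperHyperideal Q ∧ ∀ l : List A, l.length = u → hProd l ⊆ Q →
    ∃ l', l'.Sublist l ∧ l'.length = v ∧ hProd l' ⊆ Q

/-- A `(u,v)`-absorbing prime hyperideal. -/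
def IsUVAbsorbingPrime (Q : Set A) (u v : ℕ) : Prop :=
  IsProperHyperideal Q ∧ ∀ l : List A, l.length = u → (∀ x ∈ l, ¬IsUnitH x) → hProd l ⊆ Q →
    hProd (l.take v) ⊆ Q ∨ hProd (l.drop v) ⊆ Q

/-- A maximal hyperideal. -/
def IsMaximalHyperideal (M : Set A) : Prop :=
  IsProperHyperideal M ∧ ∀ B : Set A, IsHyperideal B → M ⊂ B → B = Set.univ

/-- `A` is local if it has exactly one maximal hyperideal. -/
def IsLocalH (A : Type*) [AddCommGroup A] [One A] [CommHyperring A] : Prop :=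
  ∃! M : Set A, IsMaximalHyperideal M

/-- `P` is a prime hyperideal minimal over `Q`. -/
def MinimalPrimeOver (Q P : Set A) : Prop :=
  IsPrimeHyperideal P ∧ Q ⊆ P ∧
    ∀ P' : Set A, IsPrimeHyperideal P' → Q ⊆ P' → P' ⊆ P → P' = P

/-- `Iⁿ = ⋃ {x₁∘⋯∘xₙ : xᵢ ∈ I}`. -/
def idealPow (I : Set A) (n : ℕ) : Set A :=
  ⋃ l ∈ {l : List A | l.length = n ∧ ∀ x ∈ l, x ∈ I}, hProd l

/-- `I₁∘⋯∘Iₙ = ⋃ {x₁∘⋯∘xₙ : xᵢ ∈ Iᵢ}`. -/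
def idealProd (L : List (Set A)) : Set A :=
  ⋃ l ∈ {l : List A | List.Forall₂ (· ∈ ·) l L}, hProd l

/-- `Abs(Q)`: the minimal `v` such that `Q` is `v`-absorbing. -/
noncomputable def AbsN (Q : Set A) : ℕ := sInf {v : ℕ | IsNAbsorbing Q v}

/-- `abs(Q)`: the minimal `v` such that `Q` is `(Abs(Q)+1, v)`-absorbing. -/
noncomputable def absN (Q : Set A) : ℕ := sInf {v : ℕ | IsUVAbsorbing Q (AbsN Q + 1) v}

/-- A primary hyperideal. -/
def IsPrimaryHyperideal (Q : Set A) : Prop :=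
  IsProperHyperideal Q ∧ ∀ x y : A, hmul x y ⊆ Q → x ∈ Q ∨ ∃ t : ℕ, 1 ≤ t ∧ hPow y t ⊆ Q

/-- `A` is a hyperfield if every nonzero element is a unit. -/
def IsHyperfield (A : Type*) [AddCommGroup A] [One A] [CommHyperring A] : Prop :=
  ∀ x : A, x ≠ 0 → IsUnitH x

/-- `(Q : x) = {a : a∘x ⊆ Q}`. -/
def colonH (Q : Set A) (x : A) : Set A := {a : A | hmul a x ⊆ Q}

/-- `J(A)`: the intersection of all maximal hyperideals of `A`. -/
def JacobsonH (A : Type*) [AddCommGroup A] [One A] [CommHyperring A] : Set A :=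
  ⋂₀ {M : Set A | IsMaximalHyperideal M}


/-! If `Q` is `v`-absorbing, collapsing two neighbouring factors `a, b` of a longer product into
one element `c ∈ a∘b` and absorbing shows, thanks to the `𝒞`-property, that `Q` is `n`-absorbing
for every `n ≥ v`; this gives the `(u,v)`-property. Conversely, given `x₁∘⋯∘x_{v+1} ⊆ Q`, a unit
factor can be cancelled; otherwise, repeating a factor until there are `u` of them, the
`(u,v)`-property yields `v` factors, with at most `v` distinct values, whose product lies in `Q`.
Some `xᵢ` can be dropped without losing any of these values, and since every prime containing `Q`
contains one of them, the product of the remaining `v` factors lies in `rad(Q) = Q`. -/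

open Set

theorem List.exists_forall_mem_erase_of_length_lt {α : Type*} [DecidableEq α] {s l : List α}
    (hsl : ∀ x ∈ s, x ∈ l) (hlen : s.length < l.length) : ∃ y ∈ l, ∀ x ∈ s, x ∈ l.erase y := by
  by_contra! h
  have hself : ∀ y ∈ l, y ∉ l.erase y ∧ y ∈ s := by
    intro y hy
    obtain ⟨x, hxs, hx⟩ := h y hy
    obtain rfl : x = y := by_contra fun hxy => hx ((mem_erase_of_ne hxy).2 (hsl x hxs))
    exact ⟨hx, hxs⟩
  have hnodup : l.Nodup := nodup_iff_count_le_one.2 fun a => by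
    by_cases ha : a ∈ l
    · have := count_eq_zero.2 (hself a ha).1
      rw [count_erase_self] at this
      omega
    · rw [count_eq_zero.2 ha]
      omega
  exact absurd (subperm_of_subset hnodup fun y hy => (hself y hy).2).length_le (by omega)

theorem mem_sMul {X Y : Set A} {t : A} : t ∈ sMul X Y ↔ ∃ x ∈ X, ∃ y ∈ Y, t ∈ hmul x y := by
  simp [sMul]

theorem sMul_comm (X Y : Set A) : sMul X Y = sMul Y X := by
  ext t
  simp only [mem_sMul]
  constructor <;> rintro ⟨x, hx, y, hy, ht⟩ <;> exact ⟨y, hy, x, hx, by rwa [hmul_comm]⟩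

theorem sMul_assoc (X Y Z : Set A) : sMul (sMul X Y) Z = sMul X (sMul Y Z) := by
  ext t
  simp only [mem_sMul]
  constructor
  · rintro ⟨b, ⟨x, hx, y, hy, hb⟩, z, hz, ht⟩
    have : t ∈ ⋃ b ∈ hmul x y, hmul b z := mem_biUnion hb ht
    rw [← hmul_assoc] at this
    obtain ⟨a, ha, hta⟩ := mem_iUnion₂.1 this
    exact ⟨x, hx, a, ⟨y, hy, z, hz, ha⟩, hta⟩
  · rintro ⟨x, hx, a, ⟨y, hy, z, hz, ha⟩, ht⟩
    have : t ∈ ⋃ a ∈ hmul y z, hmul x a := mem_biUnion ha ht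
    rw [hmul_assoc] at this
    obtain ⟨b, hb, htb⟩ := mem_iUnion₂.1 this
    exact ⟨b, ⟨x, hx, y, hy, hb⟩, z, hz, htb⟩

theorem sMul_mono {X X' Y Y' : Set A} (hX : X ⊆ X') (hY : Y ⊆ Y') : sMul X Y ⊆ sMul X' Y' :=
  fun _ ht =>
    let ⟨x, hx, y, hy, hxy⟩ := mem_sMul.1 ht
    mem_sMul.2 ⟨x, hX hx, y, hY hy, hxy⟩

theorem sMul_singleton_singleton (a b : A) : sMul {a} ({b} : Set A) = hmul a b := by
  simp [sMul]

theorem hProd_singleton (a : A) : hProd [a] = {a} := rfl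

theorem hProd_pair (a b : A) : hProd [a, b] = hmul a b := by
  simp [hProd]

theorem hProd_cons (a : A) {l : List A} (hl : l ≠ []) : hProd (a :: l) = sMul {a} (hProd l) := by
  cases l with
  | nil => exact absurd rfl hl
  | cons b m => simp [hProd, sMul]

theorem hProd_nonempty : ∀ l : List A, (hProd l).Nonempty
  | [] => singleton_nonempty 1
  | [a] => singleton_nonempty a
  | a :: b :: l => by
    obtain ⟨c, hc⟩ := hProd_nonempty (b :: l)
    obtain ⟨t, ht⟩ := hmul_nonempty a c
    rw [hProd_cons a (List.cons_ne_nil b l)]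
    exact ⟨t, mem_sMul.2 ⟨a, rfl, c, hc, ht⟩⟩

theorem hProd_append {l₁ l₂ : List A} (h₁ : l₁ ≠ []) (h₂ : l₂ ≠ []) :
    hProd (l₁ ++ l₂) = sMul (hProd l₁) (hProd l₂) := by
  induction l₁ with
  | nil => exact absurd rfl h₁
  | cons a m ih =>
    rcases eq_or_ne m [] with rfl | hm
    · exact hProd_cons a h₂
    rw [List.cons_append, hProd_cons a (by simp [hm]), ih hm, hProd_cons a hm, sMul_assoc]

theorem hProd_perm {l l' : List A} (h : l.Perm l') : hProd l = hProd l' := by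
  induction h with
  | nil => rfl
  | @cons x l₁ l₂ h ih =>
    rcases eq_or_ne l₁ [] with rfl | hl₁
    · rw [h.symm.eq_nil]
    rw [hProd_cons x hl₁, hProd_cons x fun h' => hl₁ (h' ▸ h).eq_nil, ih]
  | swap x y l =>
    rcases eq_or_ne l [] with rfl | hl
    · rw [hProd_pair, hProd_pair, hmul_comm]
    rw [hProd_cons y (List.cons_ne_nil x l), hProd_cons x hl, hProd_cons x (List.cons_ne_nil y l),
      hProd_cons y hl, ← sMul_assoc, ← sMul_assoc, sMul_comm {y}]
  | trans _ _ ih₁ ih₂ => exact ih₁.trans ih₂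

theorem hProd_cons_subset_of_mem_hmul {a b c : A} (hc : c ∈ hmul a b) (l : List A) :
    hProd (c :: l) ⊆ hProd (a :: b :: l) := by
  rcases eq_or_ne l [] with rfl | hl
  · simpa [hProd_singleton, hProd_pair] using hc
  rw [hProd_cons c hl, hProd_cons a (List.cons_ne_nil b l), hProd_cons b hl, ← sMul_assoc,
    sMul_singleton_singleton]
  exact sMul_mono (singleton_subset_iff.2 hc) subset_rfl

namespace IsHyperideal

variable {B : Set A}

theorem sMul_subset (hB : IsHyperideal B) {X Y : Set A} (hY : Y ⊆ B) : sMul X Y ⊆ B :=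
  fun _ ht =>
    let ⟨x, _, y, hy, hxy⟩ := mem_sMul.1 ht
    hB.2.2 x y (hY hy) hxy

theorem eq_univ_of_one_mem (hB : IsHyperideal B) (h : (1 : A) ∈ B) : B = univ :=
  eq_univ_of_forall fun a => hB.2.2 a 1 h (one_mem a)

theorem hProd_subset_of_sublist (hB : IsHyperideal B) {t l : List A} (htl : t.Sublist l)
    (ht : hProd t ⊆ B) : hProd l ⊆ B := by
  obtain ⟨r, hr⟩ := htl.exists_perm_append
  rw [hProd_perm hr]
  rcases eq_or_ne t [] with rfl | ht₀
  · rw [hB.eq_univ_of_one_mem (ht rfl)]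
    exact subset_univ _
  rcases eq_or_ne r [] with rfl | hr₀
  · rwa [List.append_nil]
  rw [hProd_append ht₀ hr₀, sMul_comm]
  exact hB.sMul_subset ht

theorem hProd_subset_of_mem (hB : IsHyperideal B) {l : List A} {x : A} (hx : x ∈ l)
    (hxB : x ∈ B) : hProd l ⊆ B :=
  hB.hProd_subset_of_sublist (List.singleton_sublist.2 hx) (singleton_subset_iff.2 hxB)

theorem hProd_subset_of_cons_of_isUnitH (hB : IsHyperideal B) {x : A} (hx : IsUnitH x)
    {l : List A} (h : hProd (x :: l) ⊆ B) : hProd l ⊆ B := by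
  obtain ⟨w, hw⟩ := hx
  rcases eq_or_ne l [] with rfl | hl
  · rw [hB.eq_univ_of_one_mem (hB.2.2 w x (h rfl) (by rwa [hmul_comm]))]
    exact subset_univ _
  rw [hProd_cons x hl] at h
  intro p hp
  have hpx : hmul p x ⊆ B := fun t ht => h (mem_sMul.2 ⟨x, rfl, p, hp, by rwa [hmul_comm]⟩)
  have hpxw : sMul {p} (hmul x w) ⊆ B := by
    rw [← sMul_singleton_singleton x w, ← sMul_assoc, sMul_singleton_singleton, sMul_comm]
    exact hB.sMul_subset hpx
  exact hpxw (mem_sMul.2 ⟨p, rfl, 1, hw, one_mem p⟩)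

end IsHyperideal

theorem IsPrimeHyperideal.exists_mem_of_hProd_subset {P : Set A} (hP : IsPrimeHyperideal P)
    {l : List A} (h : hProd l ⊆ P) : ∃ x ∈ l, x ∈ P := by
  induction l with
  | nil => exact absurd (hP.1.1.eq_univ_of_one_mem (h rfl)) hP.1.2
  | cons y r ih =>
    rcases eq_or_ne r [] with rfl | hr
    · exact ⟨y, List.mem_singleton_self y, h rfl⟩
    by_cases hy : y ∈ P
    · exact ⟨y, List.mem_cons_self, hy⟩
    rw [hProd_cons y hr] at h
    have hrP : hProd r ⊆ P := fun c hc =>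
      (hP.2 y c fun t ht => h (mem_sMul.2 ⟨y, rfl, c, hc, ht⟩)).resolve_left hy
    obtain ⟨x, hx, hxP⟩ := ih hrP
    exact ⟨x, List.mem_cons_of_mem y hx, hxP⟩

theorem hProd_subset_radH_of_forall_mem {Q : Set A} {s t : List A} (hs : hProd s ⊆ Q)
    (hst : ∀ x ∈ s, x ∈ t) : hProd t ⊆ radH Q :=
  subset_sInter fun _ ⟨hP, hQP⟩ =>
    let ⟨x, hx, hxP⟩ := hP.exists_mem_of_hProd_subset (hs.trans hQP)
    hP.1.1.hProd_subset_of_mem (hst x hx) hxP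

theorem IsNAbsorbing.succ {Q : Set A} {n : ℕ} (hC : IsCHyperideal Q) (h : IsNAbsorbing Q n) :
    IsNAbsorbing Q (n + 1) := by
  refine ⟨h.1, fun l hlen hl => ?_⟩
  obtain ⟨a, b, r, rfl⟩ : ∃ a b r, l = a :: b :: r := by
    match l, hlen with
    | a :: b :: r, _ => exact ⟨a, b, r, rfl⟩
  obtain ⟨c, hc⟩ := hmul_nonempty a b
  have hcr := hProd_cons_subset_of_mem_hmul hc
  obtain ⟨s, hs, hslen, hsQ⟩ := h.2 (c :: r) (by simpa using hlen) ((hcr r).trans hl)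
  rcases List.sublist_cons_iff.1 hs with hs | ⟨s', rfl, hs'⟩
  · exact ⟨b :: s, (hs.cons_cons b).cons a, by simp [hslen],
      h.1.1.hProd_subset_of_sublist (List.sublist_cons_self b s) hsQ⟩
  · refine ⟨a :: b :: s', (hs'.cons_cons b).cons_cons a, by simpa using hslen, ?_⟩
    -- `a∘b∘s'` contains `c∘s' ⊆ Q`, so it meets `Q`
    obtain ⟨w, hw⟩ := hProd_nonempty (c :: s')
    exact hC.2 _ (List.cons_ne_nil a _) ⟨w, hcr s' hw, hsQ hw⟩

theorem IsNAbsorbing.isABUVAbsorbing {Q : Set A} {u v : ℕ} (hC : IsCHyperideal Q)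
    (h : IsNAbsorbing Q v) (hvu : v ≤ u) : IsABUVAbsorbing Q u v := by
  obtain ⟨k, rfl⟩ := Nat.exists_eq_add_of_le hvu
  induction k with
  | zero => exact ⟨h.1, fun l hlen hl => ⟨l, List.Sublist.refl l, hlen, hl⟩⟩
  | succ k ih =>
    have hk : IsNAbsorbing Q (v + k) :=
      Nat.le_induction h (fun _ _ => IsNAbsorbing.succ hC) _ (Nat.le_add_right v k)
    refine ⟨h.1, fun l hlen hl => ?_⟩
    obtain ⟨l₁, hl₁, hl₁len, hl₁Q⟩ := hk.2 l hlen hl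
    obtain ⟨l', hl', hl'len, hl'Q⟩ := (ih (Nat.le_add_right v k)).2 l₁ hl₁len hl₁Q
    exact ⟨l', hl'.trans hl₁, hl'len, hl'Q⟩

theorem IsABUVAbsorbing.isUVAbsorbing {Q : Set A} {u v : ℕ} (h : IsABUVAbsorbing Q u v) :
    IsUVAbsorbing Q u v :=
  ⟨h.1, fun l hlen _ hl => h.2 l hlen hl⟩

theorem IsUVAbsorbing.isNAbsorbing {Q : Set A} {u v : ℕ} (hvu : v < u) (hrad : radH Q ⊆ Q)
    (h : IsUVAbsorbing Q u v) : IsNAbsorbing Q v := by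
  classical
  refine ⟨h.1, fun l hlen hl => ?_⟩
  by_cases hunit : ∃ x ∈ l, IsUnitH x
  · obtain ⟨x, hx, hxu⟩ := hunit
    refine ⟨l.erase x, List.erase_sublist, by simp [List.length_erase_of_mem hx, hlen], ?_⟩
    exact h.1.1.hProd_subset_of_cons_of_isUnitH hxu
      (by rwa [← hProd_perm (List.perm_cons_erase hx)])
  push Not at hunit
  obtain ⟨a, ha⟩ := List.exists_mem_of_length_pos (l := l) (by omega)
  set padded := l ++ List.replicate (u - (v + 1)) a
  have hmem : ∀ x ∈ padded, x ∈ l := fun x hx =>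
    (List.mem_append.1 hx).elim id fun hx => List.eq_of_mem_replicate hx ▸ ha
  have hpadlen : padded.length = u := by
    simp only [padded, List.length_append, List.length_replicate, hlen]
    omega
  obtain ⟨s, hs, hslen, hsQ⟩ := h.2 padded hpadlen
    (fun x hx => hunit x (hmem x hx))
    (h.1.1.hProd_subset_of_sublist (List.sublist_append_left l _) hl)
  obtain ⟨y, hy, hsy⟩ :=
    List.exists_forall_mem_erase_of_length_lt (fun x hx => hmem x (hs.subset hx)) (by omega)
  exact ⟨l.erase y, List.erase_sublist, by simp [List.length_erase_of_mem hy, hlen],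
    (hProd_subset_radH_of_forall_mem hsQ hsy).trans hrad⟩

theorem uv_absorbing_iff_nAbsorbing_of_radical_general (Q : Set A) (u v : ℕ)
    (hvu : v < u) (hC : IsCHyperideal Q) (hrad : radH Q = Q) :
    IsUVAbsorbing Q u v ↔ IsNAbsorbing Q v :=
  ⟨IsUVAbsorbing.isNAbsorbing hvu hrad.le,
    fun h => (h.isABUVAbsorbing hC hvu.le).isUVAbsorbing⟩

/-- a radical `𝒞`-hyperideal is `(u,v)`-absorbing iff it is
`v`-absorbing. -/
theorem uv_absorbing_iff_nAbsorbing_of_radical (Q : Set A) (u v : ℕ)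
    (hv : 1 ≤ v) (hvu : v < u) (hC : IsCHyperideal Q) (hrad : radH Q = Q) :
    IsUVAbsorbing Q u v ↔ IsNAbsorbing Q v :=
  uv_absorbing_iff_nAbsorbing_of_radical_general Q u v hvu hC hrad
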